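/- Let k be a field, V a k-vector space, and f: V → V a nilpotent k-linear endomorphism. For n ∈ ℤ let M_n(V,f) = Σ_{i,j ∈ ℕ, j−i=n} (range(f^i) ∩ ker(f^{j+1})), and for n ≥ 0 let Gr_n^M = M_n/M_{n−1} and let P_n(V,f) ⊆ Gr_n^M be the kernel of the map Gr_n^M → Gr_{−n−2}^M induced by f^{n+1}. Let V̄ = V/ker(f) with the induced nilpotent endomorphism f̄. Then for every n ≥ 1: (a) the quotient map V → V̄ maps M_n(V,f) onto M_{n−1}(V̄,f̄); and (b) the induced map Gr_n^M(V,f) → Gr_{n−1}^M(V̄,f̄) restricts to an isomorphism P_n(V,f) ≅ P_{n−1}(V̄,f̄). -/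

import Mathlib

/-!
The quotient map `p : V → V̄` sends each generator `range fⁱ ⊓ ker f^(j+1)` of `M_m(V,f)` onto the
generator `range f̄ⁱ ⊓ ker f̄ʲ` of `M_{m-1}(V̄,f̄)`, which gives (a). As `ker f ⊆ M_0 ⊆ M_{n-1}`,
the submodule `M_{n-1}` is the full preimage of `M̄_{n-2}`, so `Gr_n^M(V) → Gr_{n-1}^M(V̄)` is an
isomorphism. In negative degrees `f` maps `M_{m+2}` onto `M_m`, hence
`f^(n+1) x ∈ M_{-n-3} ↔ fⁿ x ∈ M_{-n-1} + ker f ↔ f̄ⁿ (p x) ∈ M̄_{-n-2}`: the isomorphism matches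
the primitive parts.
-/

/-- The explicit (Beilinson-style) formula for the monodromy weight filtration of a nilpotent
endomorphism `f`: `M n = Σ_{i,j ∈ ℕ, j - i = n} (range (f^i) ⊓ ker (f^(j+1)))`. -/
noncomputable def monodromyFiltration {k V : Type*} [Field k] [AddCommGroup V] [Module k V]
    (f : V →ₗ[k] V) (n : ℤ) : Submodule k V :=
  ⨆ (i : ℕ) (j : ℕ) (_ : (j : ℤ) - (i : ℤ) = n),
    (LinearMap.range (f ^ i) ⊓ LinearMap.ker (f ^ (j + 1)))

lemma Submodule.Quotient.mk_eq_zero_iff_mem_of_comap_subtype {R M : Type*} [Ring R]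
    [AddCommGroup M] [Module R M] {A N : Submodule R M} {x : M} (hx : x ∈ A) :
    (Submodule.Quotient.mk ⟨x, hx⟩ : A ⧸ N.comap A.subtype) = 0 ↔ x ∈ N := by
  rw [Submodule.Quotient.mk_eq_zero, Submodule.mem_comap, Submodule.subtype_apply]

lemma Submodule.bijective_of_subquotient_map {R M N : Type*} [Ring R]
    [AddCommGroup M] [Module R M] [AddCommGroup N] [Module R N] {p : M →ₗ[R] N}
    {A A' : Submodule R M} {B B' : Submodule R N} (hAB : A.map p = B)
    (hA'B' : B'.comap p ⊓ A ≤ A')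
    (φ : (A ⧸ A'.comap A.subtype) →ₗ[R] (B ⧸ B'.comap B.subtype))
    (hφ : ∀ (x : M) (hx : x ∈ A) (hpx : p x ∈ B),
      φ (Submodule.Quotient.mk ⟨x, hx⟩) = Submodule.Quotient.mk ⟨p x, hpx⟩) :
    Function.Bijective φ := by
  refine ⟨(injective_iff_map_eq_zero φ).2 fun a ha => ?_, fun b => ?_⟩
  · obtain ⟨⟨x, hx⟩, rfl⟩ := Submodule.Quotient.mk_surjective _ a
    have hpx : p x ∈ B := hAB ▸ Submodule.mem_map_of_mem hx
    rw [hφ x hx hpx, Submodule.Quotient.mk_eq_zero_iff_mem_of_comap_subtype] at ha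
    exact (Submodule.Quotient.mk_eq_zero_iff_mem_of_comap_subtype hx).2 (hA'B' ⟨ha, hx⟩)
  · obtain ⟨⟨y, hy⟩, rfl⟩ := Submodule.Quotient.mk_surjective _ b
    obtain ⟨x, hx, rfl⟩ := Submodule.mem_map.1 (hAB ▸ hy)
    exact ⟨_, hφ x hx hy⟩

section MonodromyFiltration

variable {k V : Type*} [Field k] [AddCommGroup V] [Module k V] (f : V →ₗ[k] V)

lemma range_pow_inf_ker_pow_le_monodromyFiltration {m : ℤ} {i j : ℕ} (h : (j : ℤ) - i = m) :
    LinearMap.range (f ^ i) ⊓ LinearMap.ker (f ^ (j + 1)) ≤ monodromyFiltration f m :=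
  le_iSup_of_le i (le_iSup_of_le j (le_iSup_of_le h le_rfl))

lemma monodromyFiltration_le_iff {m : ℤ} {S : Submodule k V} :
    monodromyFiltration f m ≤ S ↔ ∀ i j : ℕ, (j : ℤ) - i = m →
      LinearMap.range (f ^ i) ⊓ LinearMap.ker (f ^ (j + 1)) ≤ S := by
  simp only [monodromyFiltration, iSup_le_iff]

lemma monodromyFiltration_mono : Monotone (monodromyFiltration f) := by
  intro l m hlm
  refine (monodromyFiltration_le_iff f).2 fun i j hij => ?_
  obtain ⟨d, hd⟩ := Int.eq_ofNat_of_zero_le (sub_nonneg.2 hlm)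
  refine le_trans (inf_le_inf_left _ fun x hx => ?_)
    (range_pow_inf_ker_pow_le_monodromyFiltration f (i := i) (j := j + d) (by omega))
  exact Module.End.pow_map_zero_of_le (by omega) hx

lemma ker_le_monodromyFiltration {m : ℤ} (hm : 0 ≤ m) :
    LinearMap.ker f ≤ monodromyFiltration f m := fun x hx =>
  monodromyFiltration_mono f hm <|
    range_pow_inf_ker_pow_le_monodromyFiltration f (i := 0) (j := 0) (by simp)
      ⟨by simp, by simpa using hx⟩

lemma apply_mem_monodromyFiltration {m : ℤ} {x : V} (hx : x ∈ monodromyFiltration f m) :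
    f x ∈ monodromyFiltration f (m - 2) := by
  suffices monodromyFiltration f m ≤ (monodromyFiltration f (m - 2)).comap f from this hx
  refine (monodromyFiltration_le_iff f).2 ?_
  rintro i (_ | j) hij _ ⟨⟨a, rfl⟩, ha⟩
  · simp_all
  · refine range_pow_inf_ker_pow_le_monodromyFiltration f (i := i + 1) (j := j) (by omega)
      ⟨⟨a, by rw [pow_succ', Module.End.mul_apply]⟩, ?_⟩
    rw [SetLike.mem_coe, LinearMap.mem_ker] at ha ⊢
    rwa [← Module.End.mul_apply, ← pow_succ]

lemma pow_apply_mem_monodromyFiltration (t : ℕ) {m : ℤ} {x : V}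
    (hx : x ∈ monodromyFiltration f m) : (f ^ t) x ∈ monodromyFiltration f (m - 2 * t) := by
  induction t with
  | zero => simpa using hx
  | succ t ih =>
    rw [pow_succ', Module.End.mul_apply]
    convert apply_mem_monodromyFiltration f ih using 2
    push_cast
    ring

lemma monodromyFiltration_le_map {m : ℤ} (hm : m ≤ -1) :
    monodromyFiltration f m ≤ (monodromyFiltration f (m + 2)).map f := by
  refine (monodromyFiltration_le_iff f).2 fun i j hij => ?_
  rintro x ⟨⟨a, rfl⟩, hx⟩
  obtain ⟨i, rfl⟩ : ∃ i', i = i' + 1 := ⟨i - 1, by omega⟩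
  refine ⟨(f ^ i) a, range_pow_inf_ker_pow_le_monodromyFiltration f (i := i) (j := j + 1)
    (by omega) ⟨⟨a, rfl⟩, ?_⟩, by rw [← Module.End.mul_apply, ← pow_succ']⟩
  rw [SetLike.mem_coe, LinearMap.mem_ker] at hx ⊢
  rwa [← Module.End.mul_apply, ← pow_add, show j + 1 + 1 + i = j + 1 + (i + 1)
    by omega, pow_add, Module.End.mul_apply]

lemma comap_monodromyFiltration_of_neg {m : ℤ} (hm : m ≤ -1) :
    (monodromyFiltration f m).comap f = LinearMap.ker f ⊔ monodromyFiltration f (m + 2) := by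
  refine le_antisymm ?_ (sup_le (LinearMap.ker_le_comap f) fun x hx => ?_)
  · rw [sup_comm, ← Submodule.comap_map_eq]
    exact Submodule.comap_mono (monodromyFiltration_le_map f hm)
  · simpa using apply_mem_monodromyFiltration f hx

variable {f} {fbar : (V ⧸ LinearMap.ker f) →ₗ[k] (V ⧸ LinearMap.ker f)}

lemma pow_apply_mkQ
    (hfbar : ∀ x : V, fbar ((LinearMap.ker f).mkQ x) = (LinearMap.ker f).mkQ (f x))
    (t : ℕ) (x : V) : (fbar ^ t) ((LinearMap.ker f).mkQ x) = (LinearMap.ker f).mkQ ((f ^ t) x) :=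
  LinearMap.congr_fun (Module.End.commute_pow_left_of_commute (LinearMap.ext hfbar) t) x

lemma pow_apply_mkQ_eq_zero_iff
    (hfbar : ∀ x : V, fbar ((LinearMap.ker f).mkQ x) = (LinearMap.ker f).mkQ (f x))
    (j : ℕ) (x : V) : (fbar ^ j) ((LinearMap.ker f).mkQ x) = 0 ↔ (f ^ (j + 1)) x = 0 := by
  rw [pow_apply_mkQ hfbar, Submodule.mkQ_apply, Submodule.Quotient.mk_eq_zero, LinearMap.mem_ker,
    ← Module.End.mul_apply, ← pow_succ']

lemma map_mkQ_range_pow_inf_ker_pow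
    (hfbar : ∀ x : V, fbar ((LinearMap.ker f).mkQ x) = (LinearMap.ker f).mkQ (f x)) (i j : ℕ) :
    (LinearMap.range (f ^ i) ⊓ LinearMap.ker (f ^ (j + 1))).map (LinearMap.ker f).mkQ
      = LinearMap.range (fbar ^ i) ⊓ LinearMap.ker (fbar ^ j) := by
  ext y
  constructor
  · rintro ⟨_, ⟨⟨a, rfl⟩, ha⟩, rfl⟩
    exact ⟨⟨_, pow_apply_mkQ hfbar i a⟩, (pow_apply_mkQ_eq_zero_iff hfbar j _).2 ha⟩
  · rintro ⟨⟨b, rfl⟩, hb⟩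
    obtain ⟨a, rfl⟩ := Submodule.mkQ_surjective _ b
    rw [SetLike.mem_coe, LinearMap.mem_ker, pow_apply_mkQ hfbar] at hb
    exact ⟨(f ^ i) a, ⟨⟨a, rfl⟩, (pow_apply_mkQ_eq_zero_iff hfbar j _).1 hb⟩,
      (pow_apply_mkQ hfbar i a).symm⟩

lemma map_mkQ_monodromyFiltration
    (hfbar : ∀ x : V, fbar ((LinearMap.ker f).mkQ x) = (LinearMap.ker f).mkQ (f x)) (m : ℤ) :
    (monodromyFiltration f m).map (LinearMap.ker f).mkQ = monodromyFiltration fbar (m - 1) := by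
  refine le_antisymm ?_ ((monodromyFiltration_le_iff fbar).2 fun i j hij => ?_)
  · refine Submodule.map_le_iff_le_comap.2 <|
      (monodromyFiltration_le_iff f).2 fun i j hij => Submodule.map_le_iff_le_comap.1 ?_
    rw [map_mkQ_range_pow_inf_ker_pow hfbar]
    rcases j with _ | j
    · simp [Module.End.one_eq_id]
    · exact range_pow_inf_ker_pow_le_monodromyFiltration fbar (by omega)
  · rw [← map_mkQ_range_pow_inf_ker_pow hfbar]
    exact Submodule.map_mono (range_pow_inf_ker_pow_le_monodromyFiltration f (by omega))

lemma comap_mkQ_monodromyFiltration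
    (hfbar : ∀ x : V, fbar ((LinearMap.ker f).mkQ x) = (LinearMap.ker f).mkQ (f x)) (m : ℤ) :
    (monodromyFiltration fbar (m - 1)).comap (LinearMap.ker f).mkQ
      = LinearMap.ker f ⊔ monodromyFiltration f m := by
  rw [← map_mkQ_monodromyFiltration hfbar, Submodule.comap_map_mkQ]

lemma apply_mem_monodromyFiltration_iff
    (hfbar : ∀ x : V, fbar ((LinearMap.ker f).mkQ x) = (LinearMap.ker f).mkQ (f x))
    {m : ℤ} (hm : m ≤ -1) (x : V) :
    f x ∈ monodromyFiltration f m
      ↔ (LinearMap.ker f).mkQ x ∈ monodromyFiltration fbar (m + 1) := by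
  have hcomap := comap_mkQ_monodromyFiltration hfbar (m + 2)
  rw [show m + 2 - 1 = m + 1 by ring] at hcomap
  exact SetLike.ext_iff.1 ((comap_monodromyFiltration_of_neg f hm).trans hcomap.symm) x

lemma pow_succ_apply_mem_monodromyFiltration_iff
    (hfbar : ∀ x : V, fbar ((LinearMap.ker f).mkQ x) = (LinearMap.ker f).mkQ (f x))
    (n : ℕ) (x : V) :
    (f ^ (n + 1)) x ∈ monodromyFiltration f (-(n : ℤ) - 3)
      ↔ (fbar ^ n) ((LinearMap.ker f).mkQ x) ∈ monodromyFiltration fbar (-(n : ℤ) - 2) := by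
  rw [pow_succ', Module.End.mul_apply, apply_mem_monodromyFiltration_iff hfbar (by omega),
    pow_apply_mkQ hfbar, show -(n : ℤ) - 3 + 1 = -n - 2 by ring]

end MonodromyFiltration

theorem primitivePart_quotient_iso_general
    {k V : Type*} [Field k] [AddCommGroup V] [Module k V]
    (f : V →ₗ[k] V) (n : ℕ) (hn : 1 ≤ n)
    (fbar : (V ⧸ LinearMap.ker f) →ₗ[k] (V ⧸ LinearMap.ker f))
    (hfbar : ∀ x : V, fbar ((LinearMap.ker f).mkQ x) = (LinearMap.ker f).mkQ (f x)) :
    -- (a) the quotient map sends `M n` onto `M̄ (n-1)`: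
    Submodule.map (LinearMap.ker f).mkQ (monodromyFiltration f n)
        = monodromyFiltration fbar ((n : ℤ) - 1)
    -- (b) the induced map `Gr_n^M(V,f) → Gr_{n-1}^M(V̄,f̄)` restricts to an isomorphism
    -- `P_n(V,f) ≅ P_{n-1}(V̄,f̄)`:
    ∧ ∀ (g : (↥(monodromyFiltration f n) ⧸
            Submodule.comap (monodromyFiltration f (n : ℤ)).subtype
              (monodromyFiltration f ((n : ℤ) - 1))) →ₗ[k]
          (↥(monodromyFiltration f (-(n : ℤ) - 2)) ⧸
            Submodule.comap (monodromyFiltration f (-(n : ℤ) - 2)).subtype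
              (monodromyFiltration f (-(n : ℤ) - 3)))),
        -- `g` is the map `Gr_n^M(V,f) → Gr_{-n-2}^M(V,f)` induced by `f^(n+1)`:
        (∀ (x : V) (hx : x ∈ monodromyFiltration f (n : ℤ))
            (hfx : (f ^ (n + 1)) x ∈ monodromyFiltration f (-(n : ℤ) - 2)),
          g (Submodule.Quotient.mk ⟨x, hx⟩)
            = Submodule.Quotient.mk ⟨(f ^ (n + 1)) x, hfx⟩) →
      ∀ (gbar : (↥(monodromyFiltration fbar ((n : ℤ) - 1)) ⧸
            Submodule.comap (monodromyFiltration fbar ((n : ℤ) - 1)).subtype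
              (monodromyFiltration fbar ((n : ℤ) - 2))) →ₗ[k]
          (↥(monodromyFiltration fbar (-(n : ℤ) - 1)) ⧸
            Submodule.comap (monodromyFiltration fbar (-(n : ℤ) - 1)).subtype
              (monodromyFiltration fbar (-(n : ℤ) - 2)))),
        -- `gbar` is the map `Gr_{n-1}^M(V̄,f̄) → Gr_{-(n-1)-2}^M(V̄,f̄)` induced by
        -- `f̄^((n-1)+1) = f̄^n`:
        (∀ (y : V ⧸ LinearMap.ker f) (hy : y ∈ monodromyFiltration fbar ((n : ℤ) - 1))
            (hfy : (fbar ^ n) y ∈ monodromyFiltration fbar (-(n : ℤ) - 1)),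
          gbar (Submodule.Quotient.mk ⟨y, hy⟩)
            = Submodule.Quotient.mk ⟨(fbar ^ n) y, hfy⟩) →
      ∀ (φ : (↥(monodromyFiltration f n) ⧸
            Submodule.comap (monodromyFiltration f (n : ℤ)).subtype
              (monodromyFiltration f ((n : ℤ) - 1))) →ₗ[k]
          (↥(monodromyFiltration fbar ((n : ℤ) - 1)) ⧸
            Submodule.comap (monodromyFiltration fbar ((n : ℤ) - 1)).subtype
              (monodromyFiltration fbar ((n : ℤ) - 2)))),
        -- `φ` is the map `Gr_n^M(V,f) → Gr_{n-1}^M(V̄,f̄)` induced by the quotient map: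
        (∀ (x : V) (hx : x ∈ monodromyFiltration f (n : ℤ))
            (hpx : (LinearMap.ker f).mkQ x ∈ monodromyFiltration fbar ((n : ℤ) - 1)),
          φ (Submodule.Quotient.mk ⟨x, hx⟩)
            = Submodule.Quotient.mk ⟨(LinearMap.ker f).mkQ x, hpx⟩) →
        Set.BijOn φ (LinearMap.ker g) (LinearMap.ker gbar) := by
  have hM := map_mkQ_monodromyFiltration hfbar
  refine ⟨hM n, fun g hg gbar hgbar φ hφ => ?_⟩
  have hpx {x : V} (hx : x ∈ monodromyFiltration f n) :
      (LinearMap.ker f).mkQ x ∈ monodromyFiltration fbar ((n : ℤ) - 1) :=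
    hM n ▸ Submodule.mem_map_of_mem hx
  have hφ_bij : Function.Bijective φ := by
    refine Submodule.bijective_of_subquotient_map (hM n) ?_ φ hφ
    rw [← one_add_one_eq_two, ← sub_sub, comap_mkQ_monodromyFiltration hfbar,
      sup_eq_right.2 (ker_le_monodromyFiltration f (by omega))]
    exact inf_le_left
  have hker : LinearMap.ker g = (LinearMap.ker gbar).comap φ := by
    ext a
    obtain ⟨⟨x, hx⟩, rfl⟩ := Submodule.Quotient.mk_surjective _ a
    have hfx : (f ^ (n + 1)) x ∈ monodromyFiltration f (-(n : ℤ) - 2) := by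
      convert pow_apply_mem_monodromyFiltration f (n + 1) hx using 2
      push_cast
      ring
    have hfpx :
        (fbar ^ n) ((LinearMap.ker f).mkQ x) ∈ monodromyFiltration fbar (-(n : ℤ) - 1) := by
      convert pow_apply_mem_monodromyFiltration fbar n (hpx hx) using 2
      ring
    rw [LinearMap.mem_ker, Submodule.mem_comap, LinearMap.mem_ker, hg x hx hfx, hφ x hx (hpx hx),
      hgbar _ (hpx hx) hfpx, Submodule.Quotient.mk_eq_zero_iff_mem_of_comap_subtype,
      Submodule.Quotient.mk_eq_zero_iff_mem_of_comap_subtype]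
    exact pow_succ_apply_mem_monodromyFiltration_iff hfbar n x
  rw [hker, Submodule.comap_coe]
  exact hφ_bij.bijOn_preimage

/-- Let `f` be a nilpotent endomorphism of a vector space `V`, `M` its
monodromy weight filtration, `Gr_n^M = M n / M (n-1)` and `P_n ⊆ Gr_n^M` the kernel of the
map `Gr_n^M → Gr_{-n-2}^M` induced by `f^(n+1)`.  Let `V̄ = V / ker f` with induced nilpotent
endomorphism `f̄`.  Then for every `n ≥ 1`: (a) the quotient map `V → V̄` maps `M_n(V,f)`
onto `M_{n-1}(V̄,f̄)`; and (b) the induced map `Gr_n^M(V,f) → Gr_{n-1}^M(V̄,f̄)` restricts to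
an isomorphism `P_n(V,f) ≅ P_{n-1}(V̄,f̄)`. -/
theorem primitivePart_quotient_iso
    {k V : Type*} [Field k] [AddCommGroup V] [Module k V]
    (f : V →ₗ[k] V) (hf : IsNilpotent f) (n : ℕ) (hn : 1 ≤ n)
    (fbar : (V ⧸ LinearMap.ker f) →ₗ[k] (V ⧸ LinearMap.ker f))
    (hfbar : ∀ x : V, fbar ((LinearMap.ker f).mkQ x) = (LinearMap.ker f).mkQ (f x)) :
    -- (a) the quotient map sends `M n` onto `M̄ (n-1)`:
    Submodule.map (LinearMap.ker f).mkQ (monodromyFiltration f n)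
        = monodromyFiltration fbar ((n : ℤ) - 1)
    -- (b) the induced map `Gr_n^M(V,f) → Gr_{n-1}^M(V̄,f̄)` restricts to an isomorphism
    -- `P_n(V,f) ≅ P_{n-1}(V̄,f̄)`:
    ∧ ∀ (g : (↥(monodromyFiltration f n) ⧸
            Submodule.comap (monodromyFiltration f (n : ℤ)).subtype
              (monodromyFiltration f ((n : ℤ) - 1))) →ₗ[k]
          (↥(monodromyFiltration f (-(n : ℤ) - 2)) ⧸
            Submodule.comap (monodromyFiltration f (-(n : ℤ) - 2)).subtype
              (monodromyFiltration f (-(n : ℤ) - 3)))),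
        -- `g` is the map `Gr_n^M(V,f) → Gr_{-n-2}^M(V,f)` induced by `f^(n+1)`:
        (∀ (x : V) (hx : x ∈ monodromyFiltration f (n : ℤ))
            (hfx : (f ^ (n + 1)) x ∈ monodromyFiltration f (-(n : ℤ) - 2)),
          g (Submodule.Quotient.mk ⟨x, hx⟩)
            = Submodule.Quotient.mk ⟨(f ^ (n + 1)) x, hfx⟩) →
      ∀ (gbar : (↥(monodromyFiltration fbar ((n : ℤ) - 1)) ⧸
            Submodule.comap (monodromyFiltration fbar ((n : ℤ) - 1)).subtype
              (monodromyFiltration fbar ((n : ℤ) - 2))) →ₗ[k]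
          (↥(monodromyFiltration fbar (-(n : ℤ) - 1)) ⧸
            Submodule.comap (monodromyFiltration fbar (-(n : ℤ) - 1)).subtype
              (monodromyFiltration fbar (-(n : ℤ) - 2)))),
        -- `gbar` is the map `Gr_{n-1}^M(V̄,f̄) → Gr_{-(n-1)-2}^M(V̄,f̄)` induced by
        -- `f̄^((n-1)+1) = f̄^n`:
        (∀ (y : V ⧸ LinearMap.ker f) (hy : y ∈ monodromyFiltration fbar ((n : ℤ) - 1))
            (hfy : (fbar ^ n) y ∈ monodromyFiltration fbar (-(n : ℤ) - 1)),
          gbar (Submodule.Quotient.mk ⟨y, hy⟩)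
            = Submodule.Quotient.mk ⟨(fbar ^ n) y, hfy⟩) →
      ∀ (φ : (↥(monodromyFiltration f n) ⧸
            Submodule.comap (monodromyFiltration f (n : ℤ)).subtype
              (monodromyFiltration f ((n : ℤ) - 1))) →ₗ[k]
          (↥(monodromyFiltration fbar ((n : ℤ) - 1)) ⧸
            Submodule.comap (monodromyFiltration fbar ((n : ℤ) - 1)).subtype
              (monodromyFiltration fbar ((n : ℤ) - 2)))),
        -- `φ` is the map `Gr_n^M(V,f) → Gr_{n-1}^M(V̄,f̄)` induced by the quotient map:
        (∀ (x : V) (hx : x ∈ monodromyFiltration f (n : ℤ))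
            (hpx : (LinearMap.ker f).mkQ x ∈ monodromyFiltration fbar ((n : ℤ) - 1)),
          φ (Submodule.Quotient.mk ⟨x, hx⟩)
            = Submodule.Quotient.mk ⟨(LinearMap.ker f).mkQ x, hpx⟩) →
        Set.BijOn φ (LinearMap.ker g) (LinearMap.ker gbar) :=
  primitivePart_quotient_iso_general f n hn fbar hfbar
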